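/- arXiv:1103.2817 — 2 statements merged into one kernel-verified Lean document; each statement's English description precedes it below -/
import Mathlib

section
/- On ℝ × ℝ, with L = (1/2)∂²_y + y∂_x − (x³+y)∂_y, let w(x,y) = a(x⁴/2 + y²) + bxy and W̃ = exp(w). If a, b, ε > 0 satisfy 2a² − 2a + b(1 + ε/2) < 0 and b > 0, then there exist constants α, K > 0 such that (LW̃)/W̃ (x,y) ≤ K − α(1 + y² + x⁴) for all (x,y) ∈ ℝ². In particular, L log W̃ + (1/2)|∂_y log W̃|² = a + (2a²−2a)y² − bx⁴ + bxy, which is bounded above by K − α(1+y²+x⁴) using bxy ≤ (ε/2)by² + b x²/(2ε) and bx²/(2ε) ≤ (b/2)x⁴ + constant. -/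
/-!
Writing `W̃ = exp w`, the chain rule gives `L W̃ / W̃ = L w + ½ (∂_y w)²`, which for the given `w`
is the polynomial `a + (2a² − 2a + b) y² + b(2a − 1) x y + (b²/2) x² − b x⁴`. The hypothesis makes
the coefficient of `y²` negative, so two applications of Young's inequality absorb the cross term
`x y` into `y²` and `x²`, and then `x²` into `x⁴` plus a constant.
-/

open Real

noncomputable def kfpGenerator (F : ℝ → ℝ) (f : ℝ → ℝ → ℝ) (x y : ℝ) : ℝ :=
  (1/2) * deriv (fun y' => deriv (fun y'' => f x y'') y') y
    + y * deriv (fun x' => f x' y) x - (F x + y) * deriv (fun y' => f x y') y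

section Generator

variable {F : ℝ → ℝ} {f : ℝ → ℝ → ℝ} {x y fx fyy : ℝ} {fy : ℝ → ℝ}

theorem kfpGenerator_eq (hx : HasDerivAt (fun x' => f x' y) fx x)
    (hy : ∀ y', HasDerivAt (f x) (fy y') y') (hyy : HasDerivAt fy fyy y) :
    kfpGenerator F f x y = (1/2) * fyy + y * fx - (F x + y) * fy y := by
  have hderiv : deriv (f x) = fy := funext fun y' => (hy y').deriv
  simp only [kfpGenerator, hx.deriv, hderiv, hyy.deriv]

theorem kfpGenerator_exp_div_exp (hx : HasDerivAt (fun x' => f x' y) fx x)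
    (hy : ∀ y', HasDerivAt (f x) (fy y') y') (hyy : HasDerivAt fy fyy y) :
    kfpGenerator F (fun x y => exp (f x y)) x y / exp (f x y)
      = kfpGenerator F f x y + (1/2) * fy y ^ 2 := by
  have hyy_exp : HasDerivAt (fun y' => exp (f x y') * fy y')
      (exp (f x y) * fy y * fy y + exp (f x y) * fyy) y :=
    (hy y).exp.mul hyy
  rw [kfpGenerator_eq hx.exp (fun y' => (hy y').exp) hyy_exp, kfpGenerator_eq hx hy hyy]
  field_simp
  ring

end Generator

theorem mul_le_half_mul_sq_add_sq_div {t : ℝ} (ht : 0 < t) (u v : ℝ) :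
    u * v ≤ t / 2 * u ^ 2 + v ^ 2 / (2 * t) := by
  have key : t / 2 * u ^ 2 + v ^ 2 / (2 * t) - u * v = (t * u - v) ^ 2 / (2 * t) := by
    field_simp
    ring
  rw [← sub_nonneg, key]
  positivity

theorem exists_quartic_upper_bound {p q : ℝ} (hp : 0 < p) (hq : 0 < q) (c d e : ℝ) :
    ∃ α > 0, ∃ K > 0, ∀ x y : ℝ,
      e - p * y ^ 2 + c * x * y + d * x ^ 2 - q * x ^ 4 ≤ K - α * (1 + y ^ 2 + x ^ 4) := by
  set M := |d| + c ^ 2 / p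
  set α := min (p / 2) (q / 2)
  have hαp : α ≤ p / 2 := min_le_left _ _
  have hαq : α ≤ q / 2 := min_le_right _ _
  refine ⟨α, lt_min (by linarith) (by linarith), |e| + α + M ^ 2 / (2 * q) + 1, by positivity,
    fun x y => ?_⟩
  have hxy : y * (c * x) ≤ p / 4 * y ^ 2 + c ^ 2 / p * x ^ 2 := by
    have := mul_le_half_mul_sq_add_sq_div (half_pos hp) y (c * x)
    rwa [show p / 2 / 2 = p / 4 by ring, show (c * x) ^ 2 / (2 * (p / 2)) = c ^ 2 / p * x ^ 2 by
      field_simp] at this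
  have hx2 : x ^ 2 * M ≤ q / 2 * x ^ 4 + M ^ 2 / (2 * q) := by
    have := mul_le_half_mul_sq_add_sq_div hq (x ^ 2) M
    rwa [← pow_mul] at this
  have hd : d * x ^ 2 ≤ |d| * x ^ 2 := mul_le_mul_of_nonneg_right (le_abs_self d) (sq_nonneg x)
  nlinarith [le_abs_self e, mul_nonneg (sub_nonneg.2 hαp) (sq_nonneg y),
    mul_nonneg (sub_nonneg.2 hαq) (by positivity : (0 : ℝ) ≤ x ^ 4)]

section Potential

variable (a b : ℝ)

theorem hasDerivAt_potential_x (x y : ℝ) :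
    HasDerivAt (fun x' => a * (x' ^ 4 / 2 + y ^ 2) + b * x' * y) (2 * a * x ^ 3 + b * y) x := by
  refine ((((hasDerivAt_pow 4 x).div_const 2).add_const (y ^ 2) |>.const_mul a).add
    (((hasDerivAt_id' x).const_mul b).mul_const y)).congr_deriv ?_
  norm_num
  ring

theorem hasDerivAt_potential_y (x y : ℝ) :
    HasDerivAt (fun y' => a * (x ^ 4 / 2 + y' ^ 2) + b * x * y') (2 * a * y + b * x) y := by
  refine (((hasDerivAt_pow 2 y).const_add (x ^ 4 / 2) |>.const_mul a).add
    ((hasDerivAt_id' y).const_mul (b * x))).congr_deriv ?_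
  norm_num
  ring

end Potential

theorem stmt_11_general (a b ε : ℝ) (hb : 0 < b) (hε : 0 < ε)
    (hab : 2*a^2 - 2*a + b*(1 + ε/2) < 0)
    (w : ℝ → ℝ → ℝ) (hw : ∀ x y, w x y = a*(x^4/2 + y^2) + b*x*y)
    (Wt : ℝ → ℝ → ℝ) (hWt : ∀ x y, Wt x y = Real.exp (w x y)) :
    ∃ α > 0, ∃ K > 0, ∀ x y : ℝ,
      ((1/2) * deriv (fun y' => deriv (fun y'' => Wt x y'') y') y
        + y * deriv (fun x' => Wt x' y) x
        - (x^3 + y) * deriv (fun y' => Wt x y') y) / Wt x y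
      ≤ K - α * (1 + y^2 + x^4) := by
  obtain rfl : Wt = fun x y => exp (w x y) := funext fun x => funext (hWt x)
  obtain rfl : w = fun x y => a*(x^4/2 + y^2) + b*x*y := funext fun x => funext (hw x)
  have hp : 0 < -(2*a^2 - 2*a + b) := by nlinarith [mul_pos hb hε]
  obtain ⟨α, hα, K, hK, hbound⟩ := exists_quartic_upper_bound hp hb (b * (2*a - 1)) (b^2/2) a
  refine ⟨α, hα, K, hK, fun x y => ?_⟩
  have hyy : HasDerivAt (fun y' => 2*a*y' + b*x) (2*a) y := by
    simpa using ((hasDerivAt_id y).const_mul (2*a)).add_const (b*x)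
  have hx := hasDerivAt_potential_x a b x y
  have hy := hasDerivAt_potential_y a b x
  calc kfpGenerator (fun x => x^3) (fun x y => exp (a*(x^4/2 + y^2) + b*x*y)) x y
        / exp (a*(x^4/2 + y^2) + b*x*y)
      = a - -(2*a^2 - 2*a + b) * y^2 + b * (2*a - 1) * x * y + b^2/2 * x^2 - b * x^4 := by
        rw [kfpGenerator_exp_div_exp hx hy hyy, kfpGenerator_eq hx hy hyy]
        ring
    _ ≤ K - α * (1 + y^2 + x^4) := hbound x y

theorem stmt_11 (a b ε : ℝ) (ha : 0 < a) (hb : 0 < b) (hε : 0 < ε)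
    (hab : 2*a^2 - 2*a + b*(1 + ε/2) < 0)
    (w : ℝ → ℝ → ℝ) (hw : ∀ x y, w x y = a*(x^4/2 + y^2) + b*x*y)
    (Wt : ℝ → ℝ → ℝ) (hWt : ∀ x y, Wt x y = Real.exp (w x y)) :
    ∃ α > 0, ∃ K > 0, ∀ x y : ℝ,
      ((1/2) * deriv (fun y' => deriv (fun y'' => Wt x y'') y') y
        + y * deriv (fun x' => Wt x' y) x
        - (x^3 + y) * deriv (fun y' => Wt x y') y) / Wt x y
      ≤ K - α * (1 + y^2 + x^4) :=
  stmt_11_general a b ε hb hε hab w hw Wt hWt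
end

section
/- Let μ, ν be probability measures on a measurable space with ν = f·μ for a bounded measurable density f ≥ 0 with μ(f) = 1. Then the total variation distance satisfies ‖ν − μ‖_{TV} ≤ √(2 μ(f log f)) (Pinsker's inequality), where μ(f log f) is the relative entropy of ν with respect to μ. -/
/-!
The pointwise inequality `3 (x - 1)² ≤ (2x + 4) klFun x`, with `klFun x = x log x + 1 - x`, is
proved by two rounds of the sign-of-the-derivative argument around `x = 1`. By AM-GM it yields
`|x - 1| ≤ s (x + 2) / 3 + klFun x / (2s)` for every `s > 0`. Integrating against `μ` with
`∫ f = 1` gives `∫ |f - 1| ≤ s + H / (2s)` where `H = ∫ klFun ∘ f = ∫ f log f`, and the choice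
`s = √(H / 2)` gives Pinsker's inequality.
-/

open MeasureTheory Real Set InformationTheory

lemma monotoneOn_add_one_mul_log_sub :
    MonotoneOn (fun x => (x + 1) * log x - 2 * (x - 1)) (Ioi 0) := by
  have hderiv : ∀ x ∈ Ioi (0 : ℝ),
      HasDerivAt (fun x => (x + 1) * log x - 2 * (x - 1)) (log x + x⁻¹ - 1) x := by
    intro x hx
    have hx : x ≠ 0 := (mem_Ioi.1 hx).ne'
    have h := (((hasDerivAt_id x).add_const 1).mul (hasDerivAt_log hx)).sub
      (((hasDerivAt_id x).sub_const 1).const_mul 2)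
    refine h.congr_deriv ?_
    simp only [id]
    field_simp
    ring
  refine monotoneOn_of_hasDerivWithinAt_nonneg (convex_Ioi 0)
    (fun x hx => (hderiv x hx).continuousAt.continuousWithinAt)
    (fun x hx => (hderiv x (by simpa using hx)).hasDerivWithinAt) (fun x hx => ?_)
  rw [interior_Ioi] at hx
  linarith [one_sub_inv_le_log_of_pos (mem_Ioi.1 hx)]

lemma three_mul_sq_sub_one_le_mul_klFun {x : ℝ} (hx : 0 ≤ x) :
    3 * (x - 1) ^ 2 ≤ (2 * x + 4) * klFun x := by
  set ψ : ℝ → ℝ := fun x => (2 * x + 4) * klFun x - 3 * (x - 1) ^ 2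
  have hψ_cont : Continuous ψ := by fun_prop (disch := exact continuous_klFun)
  set ψ' : ℝ → ℝ := fun y => 4 * ((y + 1) * log y - 2 * (y - 1))
  have hψ' : ∀ y, 0 < y → HasDerivAt ψ (ψ' y) y := by
    intro y hy
    have h := ((((hasDerivAt_id y).const_mul 2).add_const 4).mul (hasDerivAt_klFun hy.ne')).sub
      ((((hasDerivAt_id y).sub_const 1).pow 2).const_mul 3)
    refine h.congr_deriv ?_
    simp only [ψ', klFun_apply, id]
    ring
  have hφ_mono := monotoneOn_add_one_mul_log_sub
  suffices 0 ≤ ψ x by simpa [ψ] using this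
  have hψ1 : ψ 1 = 0 := by simp [ψ, klFun_one]
  rcases le_total x 1 with hx1 | hx1
  · have : AntitoneOn ψ (Icc 0 1) := by
      refine antitoneOn_of_hasDerivWithinAt_nonpos (f' := ψ') (convex_Icc 0 1) hψ_cont.continuousOn
        (fun y hy => ?_) (fun y hy => ?_)
      · rw [interior_Icc] at hy
        exact (hψ' y hy.1).hasDerivWithinAt
      · rw [interior_Icc] at hy
        have := hφ_mono hy.1 (mem_Ioi.2 one_pos) hy.2.le
        norm_num at this
        linarith
    simpa [hψ1] using this ⟨hx, hx1⟩ ⟨zero_le_one, le_rfl⟩ hx1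
  · have : MonotoneOn ψ (Ici 1) := by
      refine monotoneOn_of_hasDerivWithinAt_nonneg (f' := ψ') (convex_Ici 1) hψ_cont.continuousOn
        (fun y hy => ?_) (fun y hy => ?_)
      · rw [interior_Ici] at hy
        exact (hψ' y (one_pos.trans hy)).hasDerivWithinAt
      · rw [interior_Ici] at hy
        have := hφ_mono (mem_Ioi.2 one_pos) (mem_Ioi.2 (one_pos.trans hy)) hy.le
        norm_num at this
        linarith
    simpa [hψ1] using this self_mem_Ici hx1 hx1

lemma abs_sub_one_le_mul_add_klFun_div {x s : ℝ} (hx : 0 ≤ x) (hs : 0 < s) :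
    |x - 1| ≤ s * (x + 2) / 3 + klFun x / (2 * s) := by
  set a := s * (x + 2) / 3
  set b := klFun x / (2 * s)
  have hab : 4 * (a * b) = (2 * x + 4) * klFun x / 3 := by
    simp only [a, b]
    field_simp
    ring
  have hb : 0 ≤ b := div_nonneg (klFun_nonneg hx) (by positivity)
  refine abs_le_of_sq_le_sq ?_ (by positivity)
  nlinarith [three_mul_sq_sub_one_le_mul_klFun hx, sq_nonneg (a - b)]

lemma klFun_le_sq_sub_one {x : ℝ} (hx : 0 ≤ x) : klFun x ≤ (x - 1) ^ 2 := by
  rcases hx.eq_or_lt with rfl | hx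
  · simp [klFun_zero]
  · rw [klFun_apply]
    nlinarith [log_le_sub_one_of_pos hx]

lemma le_sqrt_two_mul_of_forall_le_add_div {a K : ℝ} (hK : 0 ≤ K)
    (h : ∀ s, 0 < s → a ≤ s + K / (2 * s)) : a ≤ √(2 * K) := by
  rcases hK.eq_or_lt with rfl | hK
  · simpa using le_of_forall_pos_le_add fun s hs => by simpa using h s hs
  · have hs : 0 < √(2 * K) / 2 := by positivity
    have hsq : √(2 * K) ^ 2 = 2 * K := sq_sqrt (by positivity)
    convert h _ hs using 1
    field_simp
    linarith

section Pinsker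

variable {Ω : Type*} [MeasurableSpace Ω] {μ : Measure Ω} [IsProbabilityMeasure μ] {f : Ω → ℝ}

lemma integral_abs_sub_one_le_add_integral_klFun_div (hf : Integrable f μ)
    (hkl : Integrable (fun ω => klFun (f ω)) μ) (hf0 : ∀ᵐ ω ∂μ, 0 ≤ f ω)
    (hf1 : ∫ ω, f ω ∂μ = 1) {s : ℝ} (hs : 0 < s) :
    ∫ ω, |f ω - 1| ∂μ ≤ s + (∫ ω, klFun (f ω) ∂μ) / (2 * s) := by
  have hlin : Integrable (fun ω => s * (f ω + 2) / 3) μ :=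
    ((hf.add (integrable_const 2)).const_mul s).div_const 3
  calc ∫ ω, |f ω - 1| ∂μ
      ≤ ∫ ω, (s * (f ω + 2) / 3 + klFun (f ω) / (2 * s)) ∂μ := by
        refine integral_mono_ae (hf.sub (integrable_const 1)).abs
          (hlin.add (hkl.div_const _)) ?_
        filter_upwards [hf0] with ω hω using abs_sub_one_le_mul_add_klFun_div hω hs
    _ = s + (∫ ω, klFun (f ω) ∂μ) / (2 * s) := by
        rw [integral_add hlin (hkl.div_const _), integral_div, integral_const_mul,
          integral_add hf (integrable_const 2), integral_div, hf1]
        simp only [integral_const, probReal_univ, smul_eq_mul, one_mul]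
        ring

theorem integral_abs_sub_one_le_sqrt_integral_klFun (hf : Integrable f μ)
    (hkl : Integrable (fun ω => klFun (f ω)) μ) (hf0 : ∀ᵐ ω ∂μ, 0 ≤ f ω)
    (hf1 : ∫ ω, f ω ∂μ = 1) :
    ∫ ω, |f ω - 1| ∂μ ≤ √(2 * ∫ ω, klFun (f ω) ∂μ) :=
  le_sqrt_two_mul_of_forall_le_add_div
    (integral_nonneg_of_ae (hf0.mono fun _ hω => klFun_nonneg hω))
    fun _ hs => integral_abs_sub_one_le_add_integral_klFun_div hf hkl hf0 hf1 hs

lemma integral_klFun_eq_integral_mul_log (hf : Integrable f μ)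
    (hkl : Integrable (fun ω => klFun (f ω)) μ) (hf1 : ∫ ω, f ω ∂μ = 1) :
    ∫ ω, klFun (f ω) ∂μ = ∫ ω, f ω * log (f ω) ∂μ := by
  have hmul_log : (fun ω => f ω * log (f ω)) = fun ω => klFun (f ω) + f ω - 1 := by
    ext ω
    rw [klFun_apply]
    ring
  have hsum : Integrable (fun ω => klFun (f ω) + f ω) μ := hkl.add hf
  rw [hmul_log, integral_sub hsum (integrable_const 1), integral_add hkl hf, hf1]
  simp

end Pinsker

theorem stmt_17 {Ω : Type*} [MeasurableSpace Ω] (μ : Measure Ω)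
    [IsProbabilityMeasure μ]
    (f : Ω → ℝ) (hf : Measurable f) (hfpos : ∀ ω, 0 ≤ f ω)
    (M : ℝ) (hfM : ∀ ω, f ω ≤ M)
    (hf1 : ∫ ω, f ω ∂μ = 1) :
    ∫ ω, |f ω - 1| ∂μ ≤ Real.sqrt (2 * ∫ ω, f ω * Real.log (f ω) ∂μ) := by
  have hf_int : Integrable f μ :=
    Integrable.of_mem_Icc 0 M hf.aemeasurable (ae_of_all _ fun ω => ⟨hfpos ω, hfM ω⟩)
  have hkl : Integrable (fun ω => klFun (f ω)) μ := by
    refine Integrable.of_mem_Icc 0 (M ^ 2 + 1) (measurable_klFun.comp hf).aemeasurable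
      (ae_of_all _ fun ω => ⟨klFun_nonneg (hfpos ω), ?_⟩)
    nlinarith [klFun_le_sq_sub_one (hfpos ω), hfpos ω, hfM ω]
  rw [← integral_klFun_eq_integral_mul_log hf_int hkl hf1]
  exact integral_abs_sub_one_le_sqrt_integral_klFun hf_int hkl (ae_of_all _ hfpos) hf1
end
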